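/- Inversion with negative antecedents (existential): if ⊢^α_1 Γ ⇒ ∃x B(x) in the infinitary intuitionistic calculus and all formulas of Γ are negative (contain no ∨ and no ∃), then there exists n ∈ ω with ⊢^α_1 Γ ⇒ B(n̄). -/

import Mathlib

open Ordinal

/-- Sentences of `L_HA`: closed equations (closed terms identified with their numeral
values), propositional connectives, and quantifiers represented by their ω-many
numeral instances. -/
inductive Sent : Type
  | eq (n m : ℕ)           -- the closed equation `n̄ = m̄`
  | or (A B : Sent)
  | and (A B : Sent)
  | imp (A B : Sent)
  | ex (B : ℕ → Sent)      -- `∃x B(x)`, given by its instances `B(n̄)`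
  | all (B : ℕ → Sent)     -- `∀x B(x)`, given by its instances `B(n̄)`

/-- Negative sentences: no disjunction and no existential quantifier occurs. -/
def isNegative : Sent → Prop
  | .eq _ _ => True
  | .or _ _ => False
  | .and A B => isNegative A ∧ isNegative B
  | .imp A B => isNegative A ∧ isNegative B
  | .ex _ => False
  | .all B => ∀ n, isNegative (B n)

/-- `Deriv cutOK α Γ C` : in the infinitary sequent calculus `HA^∞` (ω-rules for `L∃`
and `R∀`), the sequent `Γ ⇒ C` has a derivation of depth `≤ α` in which every cut
formula satisfies `cutOK`.  Initial sequents: `Γ, ⊥ ⇒ A` and `Γ ⇒ ⊤`. -/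
inductive Deriv (cutOK : Sent → Prop) : Ordinal → Set Sent → Sent → Prop
  | axBot {α Γ C n m} : n ≠ m → Sent.eq n m ∈ Γ → Deriv cutOK α Γ C
  | axTop {α Γ n} : Deriv cutOK α Γ (.eq n n)
  | orL {α γ₀ γ₁ Γ A₀ A₁ C} : γ₀ < α → γ₁ < α →
      Deriv cutOK γ₀ (insert A₀ Γ) C → Deriv cutOK γ₁ (insert A₁ Γ) C →
      Deriv cutOK α (insert (.or A₀ A₁) Γ) C
  | orR₀ {α γ Γ A₀ A₁} : γ < α → Deriv cutOK γ Γ A₀ → Deriv cutOK α Γ (.or A₀ A₁)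
  | orR₁ {α γ Γ A₀ A₁} : γ < α → Deriv cutOK γ Γ A₁ → Deriv cutOK α Γ (.or A₀ A₁)
  | andL₀ {α γ Γ A₀ A₁ C} : γ < α →
      Deriv cutOK γ (insert A₀ (insert (.and A₀ A₁) Γ)) C →
      Deriv cutOK α (insert (.and A₀ A₁) Γ) C
  | andL₁ {α γ Γ A₀ A₁ C} : γ < α →
      Deriv cutOK γ (insert A₁ (insert (.and A₀ A₁) Γ)) C →
      Deriv cutOK α (insert (.and A₀ A₁) Γ) C
  | andR {α γ₀ γ₁ Γ A₀ A₁} : γ₀ < α → γ₁ < α →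
      Deriv cutOK γ₀ Γ A₀ → Deriv cutOK γ₁ Γ A₁ → Deriv cutOK α Γ (.and A₀ A₁)
  | impL {α γ₀ γ₁ Γ A B C} : γ₀ < α → γ₁ < α →
      Deriv cutOK γ₀ (insert (.imp A B) Γ) A → Deriv cutOK γ₁ (insert B Γ) C →
      Deriv cutOK α (insert (.imp A B) Γ) C
  | impR {α γ Γ A B} : γ < α → Deriv cutOK γ (insert A Γ) B →
      Deriv cutOK α Γ (.imp A B)
  | exL {α Γ B C} (γ : ℕ → Ordinal) : (∀ n, γ n < α) →
      (∀ n, Deriv cutOK (γ n) (insert (B n) Γ) C) →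
      Deriv cutOK α (insert (.ex B) Γ) C
  | exR {α γ Γ B} (n : ℕ) : γ < α → Deriv cutOK γ Γ (B n) →
      Deriv cutOK α Γ (.ex B)
  | allL {α γ Γ B C} (n : ℕ) : γ < α →
      Deriv cutOK γ (insert (B n) (insert (.all B) Γ)) C →
      Deriv cutOK α (insert (.all B) Γ) C
  | allR {α Γ B} (γ : ℕ → Ordinal) : (∀ n, γ n < α) →
      (∀ n, Deriv cutOK (γ n) Γ (B n)) → Deriv cutOK α Γ (.all B)
  | cut {α γ₀ γ₁ Γ Δ A C} : cutOK A → γ₀ < α → γ₁ < α →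
      Deriv cutOK γ₀ Γ A → Deriv cutOK γ₁ (insert A Δ) C →
      Deriv cutOK α (Γ ∪ Δ) C

/-- `⊢^α_1 Γ ⇒ C` : derivability with depth `≤ α` and all cut formulas of rank `0`,
i.e. negative cut formulas. -/
def Deriv1 (α : Ordinal) (Γ : Set Sent) (C : Sent) : Prop := Deriv isNegative α Γ C

/-!
Induction on the derivation of `Γ ⇒ ∃x B(x)`. An `R∃` inference supplies the witness
directly. The left rules `L∨` and `L∃` cannot occur, because their principal formula would lie
in the negative antecedent. Every other inference that can end the derivation is a left rule
or a cut, and it has a premise with the same succedent `∃x B(x)` whose antecedent is still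
negative (for a cut because the cut formula is negative), so the induction hypothesis
applies to that premise and the inference is repeated with `B(n̄)` as succedent.
-/

theorem Deriv.mono {cutOK : Sent → Prop} {α β : Ordinal} {Γ : Set Sent} {C : Sent}
    (h : Deriv cutOK α Γ C) (hαβ : α ≤ β) : Deriv cutOK β Γ C := by
  cases h with
  | axBot hnm hmem => exact .axBot hnm hmem
  | axTop => exact .axTop
  | orL h₀ h₁ d₀ d₁ => exact .orL (h₀.trans_le hαβ) (h₁.trans_le hαβ) d₀ d₁
  | orR₀ h d => exact .orR₀ (h.trans_le hαβ) d
  | orR₁ h d => exact .orR₁ (h.trans_le hαβ) d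
  | andL₀ h d => exact .andL₀ (h.trans_le hαβ) d
  | andL₁ h d => exact .andL₁ (h.trans_le hαβ) d
  | andR h₀ h₁ d₀ d₁ => exact .andR (h₀.trans_le hαβ) (h₁.trans_le hαβ) d₀ d₁
  | impL h₀ h₁ d₀ d₁ => exact .impL (h₀.trans_le hαβ) (h₁.trans_le hαβ) d₀ d₁
  | impR h d => exact .impR (h.trans_le hαβ) d
  | exL γ hγ d => exact .exL γ (fun n => (hγ n).trans_le hαβ) d
  | exR n h d => exact .exR n (h.trans_le hαβ) d
  | allL n h d => exact .allL n (h.trans_le hαβ) d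
  | allR γ hγ d => exact .allR γ (fun n => (hγ n).trans_le hαβ) d
  | cut hA h₀ h₁ d₀ d₁ => exact .cut hA (h₀.trans_le hαβ) (h₁.trans_le hαβ) d₀ d₁

theorem Deriv.exists_instance_of_ex {cutOK : Sent → Prop}
    (hcut : ∀ A, cutOK A → isNegative A) {α : Ordinal} {Γ : Set Sent} {B : ℕ → Sent}
    (hΓ : ∀ A ∈ Γ, isNegative A) (h : Deriv cutOK α Γ (.ex B)) :
    ∃ n, Deriv cutOK α Γ (B n) := by
  generalize hC : Sent.ex B = C at h
  induction h generalizing B with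
  | axBot hnm hmem => exact ⟨0, .axBot hnm hmem⟩
  | axTop | orR₀ | orR₁ | andR | impR | allR => cases hC
  | orL | exL => exact (hΓ _ (Set.mem_insert _ _)).elim
  | exR n h d =>
    cases hC
    exact ⟨n, d.mono h.le⟩
  | andL₀ h _ ih =>
    obtain ⟨n, d⟩ := ih (Set.forall_insert_of_forall hΓ (hΓ _ (Set.mem_insert _ _)).1) hC
    exact ⟨n, .andL₀ h d⟩
  | andL₁ h _ ih =>
    obtain ⟨n, d⟩ := ih (Set.forall_insert_of_forall hΓ (hΓ _ (Set.mem_insert _ _)).2) hC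
    exact ⟨n, .andL₁ h d⟩
  | impL h₀ h₁ d₀ _ _ ih₁ =>
    obtain ⟨⟨_, hB'⟩, hΓ'⟩ := Set.forall_mem_insert.1 hΓ
    obtain ⟨n, d⟩ := ih₁ (Set.forall_insert_of_forall hΓ' hB') hC
    exact ⟨n, .impL h₀ h₁ d₀ d⟩
  | allL m h _ ih =>
    obtain ⟨n, d⟩ := ih (Set.forall_insert_of_forall hΓ (hΓ _ (Set.mem_insert _ _) m)) hC
    exact ⟨n, .allL m h d⟩
  | cut hA h₀ h₁ d₀ _ _ ih₁ =>
    have hΔ := fun X hX => hΓ X (Set.mem_union_right _ hX)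
    obtain ⟨n, d⟩ := ih₁ (Set.forall_insert_of_forall hΔ (hcut _ hA)) hC
    exact ⟨n, .cut hA h₀ h₁ d₀ d⟩

/-- Inversion with negative antecedents (existential): if `⊢^α_1 Γ ⇒ ∃x B(x)` and
every formula of `Γ` is negative, then `⊢^α_1 Γ ⇒ B(n̄)` for some `n ∈ ω`. -/
theorem inversion_ex_negative {α : Ordinal} {Γ : Set Sent} {B : ℕ → Sent}
    (hΓ : ∀ A ∈ Γ, isNegative A) (h : Deriv1 α Γ (.ex B)) :
    ∃ n : ℕ, Deriv1 α Γ (B n) :=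
  Deriv.exists_instance_of_ex (fun _ hA => hA) hΓ h
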